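/- Under the errors-in-variables setup a = a₀ + ã, b = X₀ᵀa₀ + b̃ with centered errors of covariance σ²I_{n+d}, the expected derivative of the estimating function s at X₀ applied to H ∈ ℝ^{n×d} equals a₀a₀ᵀH, i.e., E[s'_X(a,b;X₀)·H] = a₀a₀ᵀH for all H. -/

import Mathlib

/-!
The derivative `s'_X(a, b) H` is a fixed linear function of the three moments `aaᵀ`, `arᵀ`,
`rrᵀ`, where `r = Xᵀa - b`. At `X₀` the residual is the pure noise `X₀ᵀã - b̃`, so these moments
are affine in the first and second moments of `(ã, b̃)` and the expectation can be taken inside: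
isotropy gives `E[aaᵀ] = a₀a₀ᵀ + σ²I`, `E[arᵀ] = σ²X₀` and `E[rrᵀ] = σ²(I + X₀ᵀX₀)`. The last one
cancels the factor `(I + X₀ᵀX₀)⁻¹` it meets in `s'`, after which the noise contributions cancel in
pairs and only `a₀a₀ᵀH` survives.
-/

open Matrix MeasureTheory

attribute [local instance] Matrix.frobeniusNormedAddCommGroup Matrix.frobeniusNormedSpace

/-- Entrywise expectation of a random matrix. -/
noncomputable def matExp {Ω : Type*} [MeasurableSpace Ω] (μ : Measure Ω) {p q : ℕ}
    (M : Ω → Matrix (Fin p) (Fin q) ℝ) : Matrix (Fin p) (Fin q) ℝ :=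
  Matrix.of fun i j => ∫ ω, M ω i j ∂μ

/-- The TLS estimating function
`s(a,b;X) = a(aᵀX − bᵀ) − X(I_d + XᵀX)⁻¹(Xᵀa − b)(aᵀX − bᵀ)`. -/
noncomputable def tlsScore {n d : ℕ} (a : Fin n → ℝ) (b : Fin d → ℝ)
    (X : Matrix (Fin n) (Fin d) ℝ) : Matrix (Fin n) (Fin d) ℝ :=
  vecMulVec a (Xᵀ.mulVec a - b) -
    X * (1 + Xᵀ * X)⁻¹ * vecMulVec (Xᵀ.mulVec a - b) (Xᵀ.mulVec a - b)

section MatrixCalculus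

variable {E : Type*} [NormedAddCommGroup E] [NormedSpace ℝ E] {x : E}
  {l m p : Type*} [Fintype l] [Fintype m] [Fintype p]

theorem Matrix.isBoundedBilinearMap_mul :
    IsBoundedBilinearMap ℝ fun A : Matrix l m ℝ × Matrix m p ℝ => A.1 * A.2 where
  add_left := Matrix.add_mul
  smul_left := Matrix.smul_mul
  add_right := Matrix.mul_add
  smul_right c A B := Matrix.mul_smul A c B
  bound := ⟨1, one_pos, fun A B => by simpa using frobenius_norm_mul A B⟩

theorem Matrix.isBoundedLinearMap_transpose :
    IsBoundedLinearMap ℝ fun A : Matrix l m ℝ => Aᵀ :=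
  IsLinearMap.with_bound ⟨transpose_add, transpose_smul⟩ 1 fun A => by
    rw [frobenius_norm_transpose, one_mul]

theorem HasFDerivAt.matrix_mul {f : E → Matrix l m ℝ} {g : E → Matrix m p ℝ} {f' g'}
    (hf : HasFDerivAt f f' x) (hg : HasFDerivAt g g' x) :
    HasFDerivAt (fun y => f y * g y)
      ((Matrix.isBoundedBilinearMap_mul.deriv (f x, g x)).comp (f'.prod g')) x := by
  exact (Matrix.isBoundedBilinearMap_mul.hasFDerivAt (f x, g x)).comp x (hf.prodMk hg)

theorem HasFDerivAt.const_matrix_mul (A : Matrix l m ℝ) {g : E → Matrix m p ℝ} {g'}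
    (hg : HasFDerivAt g g' x) :
    HasFDerivAt (fun y => A * g y)
      ((Matrix.isBoundedBilinearMap_mul.toContinuousLinearMap A).comp g') x :=
  (Matrix.isBoundedBilinearMap_mul.toContinuousLinearMap A).hasFDerivAt.comp x hg

theorem HasFDerivAt.matrix_mul_const {f : E → Matrix l m ℝ} {f'} (hf : HasFDerivAt f f' x)
    (B : Matrix m p ℝ) :
    HasFDerivAt (fun y => f y * B)
      ((Matrix.isBoundedBilinearMap_mul.toContinuousLinearMap.flip B).comp f') x :=
  (Matrix.isBoundedBilinearMap_mul.toContinuousLinearMap.flip B).hasFDerivAt.comp x hf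

theorem HasFDerivAt.matrix_transpose {f : E → Matrix l m ℝ} {f'} (hf : HasFDerivAt f f' x) :
    HasFDerivAt (fun y => (f y)ᵀ)
      (Matrix.isBoundedLinearMap_transpose.toContinuousLinearMap.comp f') x :=
  Matrix.isBoundedLinearMap_transpose.hasFDerivAt.comp x hf

section

attribute [local instance] Matrix.frobeniusNormedRing Matrix.frobeniusNormedAlgebra

theorem Matrix.hasFDerivAt_inv [DecidableEq m] {A : Matrix m m ℝ} (hA : IsUnit A) :
    HasFDerivAt (fun B : Matrix m m ℝ => B⁻¹)
      (-ContinuousLinearMap.mulLeftRight ℝ _ A⁻¹ A⁻¹) A := by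
  have h := hasFDerivAt_ringInverse (𝕜 := ℝ) hA.unit
  have hinv : (Ring.inverse : Matrix m m ℝ → _) = fun B => B⁻¹ :=
    funext fun B => (nonsing_inv_eq_ringInverse B).symm
  rw [← hA.unit_spec, ← coe_units_inv]
  rwa [hinv] at h

end

end MatrixCalculus

section Derivative

variable {n d : ℕ}

theorem isUnit_one_add_transpose_mul_self (X : Matrix (Fin n) (Fin d) ℝ) :
    IsUnit (1 + Xᵀ * X) := by
  have hpsd : (Xᵀ * X).PosSemidef := by
    simpa using posSemidef_conjTranspose_mul_self X
  exact (PosDef.one.add_posSemidef hpsd).isUnit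

theorem tlsScore_eq_replicateCol (a : Fin n → ℝ) (b : Fin d → ℝ) (X : Matrix (Fin n) (Fin d) ℝ) :
    tlsScore a b X =
      replicateCol (Fin 1) a * (Xᵀ * replicateCol (Fin 1) a - replicateCol (Fin 1) b)ᵀ -
        X * (1 + Xᵀ * X)⁻¹ * ((Xᵀ * replicateCol (Fin 1) a - replicateCol (Fin 1) b) *
          (Xᵀ * replicateCol (Fin 1) a - replicateCol (Fin 1) b)ᵀ) := by
  have hcol : replicateCol (Fin 1) (Xᵀ *ᵥ a - b) =
      Xᵀ * replicateCol (Fin 1) a - replicateCol (Fin 1) b := by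
    rw [← replicateCol_mulVec]; rfl
  simp only [tlsScore, vecMulVec_eq (Fin 1), ← transpose_replicateCol, hcol]
  rfl

noncomputable def tlsScoreDerivOfMoments (X H : Matrix (Fin n) (Fin d) ℝ) :
    Matrix (Fin n) (Fin n) ℝ × Matrix (Fin n) (Fin d) ℝ × Matrix (Fin d) (Fin d) ℝ →ₗ[ℝ]
      Matrix (Fin n) (Fin d) ℝ where
  toFun S :=
    let N := (1 + Xᵀ * X)⁻¹
    S.1 * H - H * N * S.2.2 + X * N * (Hᵀ * X + Xᵀ * H) * N * S.2.2 -
      X * N * (Hᵀ * S.2.1 + S.2.1ᵀ * H)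
  map_add' S T := by
    simp only [Prod.fst_add, Prod.snd_add, transpose_add, Matrix.add_mul, Matrix.mul_add]
    abel
  map_smul' c S := by
    simp only [Prod.smul_fst, Prod.smul_snd, transpose_smul, Matrix.smul_mul, Matrix.mul_smul,
      Matrix.mul_add, RingHom.id_apply, smul_add, smul_sub]

theorem fderiv_tlsScore_apply (a : Fin n → ℝ) (b : Fin d → ℝ) (X H : Matrix (Fin n) (Fin d) ℝ) :
    fderiv ℝ (tlsScore a b) X H =
      tlsScoreDerivOfMoments X H
        (vecMulVec a a, vecMulVec a (Xᵀ *ᵥ a - b), vecMulVec (Xᵀ *ᵥ a - b) (Xᵀ *ᵥ a - b)) := by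
  set A := replicateCol (Fin 1) a with hA
  set B := replicateCol (Fin 1) b
  have hres : HasFDerivAt (fun Y : Matrix (Fin n) (Fin d) ℝ => Yᵀ * A - B) _ X :=
    ((hasFDerivAt_id X).matrix_transpose.matrix_mul_const A).sub_const B
  have hinv : HasFDerivAt (fun Y : Matrix (Fin n) (Fin d) ℝ => (1 + Yᵀ * Y)⁻¹) _ X :=
    (Matrix.hasFDerivAt_inv (isUnit_one_add_transpose_mul_self X)).comp X
      (((hasFDerivAt_id X).matrix_transpose.matrix_mul (hasFDerivAt_id X)).const_add 1)
  have hscore : HasFDerivAt (fun Y => A * (Yᵀ * A - B)ᵀ -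
      Y * (1 + Yᵀ * Y)⁻¹ * ((Yᵀ * A - B) * (Yᵀ * A - B)ᵀ)) _ X :=
    (hres.matrix_transpose.const_matrix_mul A).sub
      (((hasFDerivAt_id X).matrix_mul hinv).matrix_mul (hres.matrix_mul hres.matrix_transpose))
  rw [funext (tlsScore_eq_replicateCol a b), hscore.fderiv]
  -- the product rule, unfolded
  change A * (Hᵀ * A)ᵀ - (X * (1 + Xᵀ * X)⁻¹ * ((Xᵀ * A - B) * (Hᵀ * A)ᵀ + Hᵀ * A * (Xᵀ * A - B)ᵀ)
    + (X * -((1 + Xᵀ * X)⁻¹ * (Xᵀ * H + Hᵀ * X) * (1 + Xᵀ * X)⁻¹) + H * (1 + Xᵀ * X)⁻¹) *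
      ((Xᵀ * A - B) * (Xᵀ * A - B)ᵀ)) = _
  have hcol : replicateCol (Fin 1) (Xᵀ *ᵥ a - b) = Xᵀ * A - B := by
    rw [← replicateCol_mulVec]; rfl
  have hHA : (Hᵀ * A)ᵀ = Aᵀ * H := by rw [transpose_mul, transpose_transpose]
  set R := Xᵀ * A - B
  simp only [tlsScoreDerivOfMoments, LinearMap.coe_mk, AddHom.coe_mk, transpose_vecMulVec]
  simp only [vecMulVec_eq (Fin 1), ← transpose_replicateCol, hcol, ← hA, hHA]
  simp only [Matrix.mul_add, Matrix.add_mul, Matrix.mul_neg, Matrix.neg_mul, Matrix.mul_assoc]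
  -- the two sides reach the same products through different `Mul ℝ` instance paths
  abel!

end Derivative

section Expectation

variable {Ω : Type*} [MeasurableSpace Ω] {μ : Measure Ω} {p q : ℕ}

theorem integrable_ofSymm (M : Ω → Matrix (Fin p) (Fin q) ℝ)
    (hM : ∀ i j, Integrable (fun ω => M ω i j) μ) : Integrable (fun ω => of.symm (M ω)) μ :=
  Integrable.of_eval fun i => Integrable.of_eval (hM i)

theorem integral_ofSymm_eq_matExp (M : Ω → Matrix (Fin p) (Fin q) ℝ)
    (hM : ∀ i j, Integrable (fun ω => M ω i j) μ) :
    ∫ ω, of.symm (M ω) ∂μ = of.symm (matExp μ M) := by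
  ext i j
  rw [eval_integral (f := fun ω => of.symm (M ω)) (fun i => Integrable.of_eval (hM i)),
    eval_integral (f := fun ω => of.symm (M ω) i) (hM i)]
  rfl

theorem matExp_const_add_linearMap [IsProbabilityMeasure μ] {V : Type*} [NormedAddCommGroup V]
    [NormedSpace ℝ V] [FiniteDimensional ℝ V] (c : Matrix (Fin p) (Fin q) ℝ)
    (L : V →ₗ[ℝ] Matrix (Fin p) (Fin q) ℝ) {W : Ω → V} (hW : Integrable W μ) :
    matExp μ (fun ω => c + L (W ω)) = c + L (∫ ω, W ω ∂μ) := by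
  ext i j
  let ℓ : V →L[ℝ] ℝ := LinearMap.toContinuousLinearMap (entryLinearMap ℝ ℝ i j ∘ₗ L)
  have hℓ : ∀ v, L v i j = ℓ v := fun _ => rfl
  simp only [matExp, of_apply, Matrix.add_apply, hℓ]
  rw [integral_add (integrable_const _) (ℓ.integrable_comp hW), integral_const,
    ℓ.integral_comp_comm hW]
  simp

end Expectation

section Noise

variable {n d : ℕ} {Ω : Type*} [MeasurableSpace Ω] {μ : Measure Ω}

-- Plain arrays rather than `Matrix`: with the Frobenius norm in scope, `Integrable` does not
-- elaborate for `Matrix`-valued maps, whose norm topology is not reducibly the product topology.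
abbrev NoiseMomentSpace (n d : ℕ) : Type :=
  (Fin n → ℝ) × (Fin d → ℝ) × (Fin n → Fin n → ℝ) × (Fin n → Fin d → ℝ) × (Fin d → Fin d → ℝ)

def noiseMoments (u : Fin n → ℝ) (w : Fin d → ℝ) : NoiseMomentSpace n d :=
  (u, w, of.symm (vecMulVec u u), of.symm (vecMulVec u w), of.symm (vecMulVec w w))

noncomputable def momentsOfNoise (a0 : Fin n → ℝ) (X0 : Matrix (Fin n) (Fin d) ℝ) :
    NoiseMomentSpace n d →ₗ[ℝ]
      Matrix (Fin n) (Fin n) ℝ × Matrix (Fin n) (Fin d) ℝ × Matrix (Fin d) (Fin d) ℝ where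
  toFun N :=
    let u := N.1
    let w := N.2.1
    let P := of N.2.2.1
    let Q := of N.2.2.2.1
    let R := of N.2.2.2.2
    (vecMulVec a0 u + vecMulVec u a0 + P,
      vecMulVec a0 (X0ᵀ *ᵥ u - w) + P * X0 - Q,
      X0ᵀ * P * X0 - X0ᵀ * Q - Qᵀ * X0 + R)
  map_add' N N' := by
    simp only [Prod.fst_add, Prod.snd_add, ← of_add_of, mulVec_add, vecMulVec_add, add_vecMulVec,
      vecMulVec_sub, transpose_add, Matrix.add_mul, Matrix.mul_add, Prod.mk_add_mk, Prod.mk.injEq]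
    exact ⟨by abel, by abel, by abel⟩
  map_smul' c N := by
    simp only [Prod.smul_fst, Prod.smul_snd, ← smul_of, mulVec_smul, vecMulVec_smul,
      smul_vecMulVec, vecMulVec_sub, transpose_smul, Matrix.smul_mul, Matrix.mul_smul,
      RingHom.id_apply, Prod.smul_mk, smul_add, smul_sub]

theorem moments_eq_momentsOfNoise (a0 u : Fin n → ℝ) (w : Fin d → ℝ)
    (X0 : Matrix (Fin n) (Fin d) ℝ) :
    (vecMulVec (a0 + u) (a0 + u), vecMulVec (a0 + u) (X0ᵀ *ᵥ (a0 + u) - (X0ᵀ *ᵥ a0 + w)),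
        vecMulVec (X0ᵀ *ᵥ (a0 + u) - (X0ᵀ *ᵥ a0 + w)) (X0ᵀ *ᵥ (a0 + u) - (X0ᵀ *ᵥ a0 + w))) =
      (vecMulVec a0 a0, 0, 0) + momentsOfNoise a0 X0 (noiseMoments u w) := by
  have hres : X0ᵀ *ᵥ (a0 + u) - (X0ᵀ *ᵥ a0 + w) = X0ᵀ *ᵥ u - w := by
    rw [mulVec_add]; abel
  simp only [hres, momentsOfNoise, noiseMoments, LinearMap.coe_mk, AddHom.coe_mk,
    Equiv.apply_symm_apply, Prod.mk_add_mk, Prod.mk.injEq, zero_add]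
  simp only [add_vecMulVec, vecMulVec_add, sub_vecMulVec, vecMulVec_sub, vecMulVec_mul,
    mul_vecMulVec, transpose_vecMulVec, mulVec_transpose]
  exact ⟨by abel, by abel, by abel⟩

theorem momentsOfNoise_isotropic (a0 : Fin n → ℝ) (X0 : Matrix (Fin n) (Fin d) ℝ) (σ2 : ℝ) :
    momentsOfNoise a0 X0 (0, 0, of.symm (σ2 • 1), 0, of.symm (σ2 • 1)) =
      (σ2 • 1, σ2 • X0, σ2 • (1 + X0ᵀ * X0)) := by
  have h0 : vecMulVec a0 (0 : Fin d → ℝ) = 0 := map_zero (vecMulVecBilin ℝ ℝ a0)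
  simp [momentsOfNoise, h0, add_comm]

theorem tlsScoreDerivOfMoments_isotropic (X H : Matrix (Fin n) (Fin d) ℝ)
    (P : Matrix (Fin n) (Fin n) ℝ) (σ2 : ℝ) :
    tlsScoreDerivOfMoments X H (P + σ2 • 1, σ2 • X, σ2 • (1 + Xᵀ * X)) = P * H := by
  have hN : (1 + Xᵀ * X)⁻¹ * (1 + Xᵀ * X) = 1 :=
    nonsing_inv_mul _ ((isUnit_iff_isUnit_det _).mp (isUnit_one_add_transpose_mul_self X))
  simp only [tlsScoreDerivOfMoments, LinearMap.coe_mk, AddHom.coe_mk, Matrix.add_mul,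
    Matrix.mul_smul, Matrix.smul_mul, transpose_smul, Matrix.mul_assoc, hN, Matrix.mul_one,
    Matrix.one_mul, ← smul_add]
  abel

theorem integrable_noiseMoments {u : Ω → Fin n → ℝ} {w : Ω → Fin d → ℝ}
    (hu : ∀ i, Integrable (fun ω => u ω i) μ) (hw : ∀ i, Integrable (fun ω => w ω i) μ)
    (huu : ∀ i j, Integrable (fun ω => u ω i * u ω j) μ)
    (huw : ∀ i j, Integrable (fun ω => u ω i * w ω j) μ)
    (hww : ∀ i j, Integrable (fun ω => w ω i * w ω j) μ) :
    Integrable (fun ω => noiseMoments (u ω) (w ω)) μ :=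
  (Integrable.of_eval hu).prodMk <| (Integrable.of_eval hw).prodMk <|
    (integrable_ofSymm _ huu).prodMk <| (integrable_ofSymm _ huw).prodMk
      (integrable_ofSymm _ hww)

theorem integral_noiseMoments {u : Ω → Fin n → ℝ} {w : Ω → Fin d → ℝ}
    (hu : ∀ i, Integrable (fun ω => u ω i) μ) (hw : ∀ i, Integrable (fun ω => w ω i) μ)
    (huu : ∀ i j, Integrable (fun ω => u ω i * u ω j) μ)
    (huw : ∀ i j, Integrable (fun ω => u ω i * w ω j) μ)
    (hww : ∀ i j, Integrable (fun ω => w ω i * w ω j) μ) :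
    ∫ ω, noiseMoments (u ω) (w ω) ∂μ =
      (∫ ω, u ω ∂μ, ∫ ω, w ω ∂μ, of.symm (matExp μ fun ω => vecMulVec (u ω) (u ω)),
        of.symm (matExp μ fun ω => vecMulVec (u ω) (w ω)),
        of.symm (matExp μ fun ω => vecMulVec (w ω) (w ω))) := by
  have huu' := integrable_ofSymm (fun ω => vecMulVec (u ω) (u ω)) huu
  have huw' := integrable_ofSymm (fun ω => vecMulVec (u ω) (w ω)) huw
  have hww' := integrable_ofSymm (fun ω => vecMulVec (w ω) (w ω)) hww
  simp only [noiseMoments]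
  rw [integral_pair (Integrable.of_eval hu)
      ((Integrable.of_eval hw).prodMk <| huu'.prodMk <| huw'.prodMk hww'),
    integral_pair (Integrable.of_eval hw) (huu'.prodMk <| huw'.prodMk hww'),
    integral_pair huu' (huw'.prodMk hww'), integral_pair huw' hww',
    integral_ofSymm_eq_matExp (fun ω => vecMulVec (u ω) (u ω)) huu,
    integral_ofSymm_eq_matExp (fun ω => vecMulVec (u ω) (w ω)) huw,
    integral_ofSymm_eq_matExp (fun ω => vecMulVec (w ω) (w ω)) hww]

end Noise

theorem matExp_fderiv_tlsScore_general {Ω : Type*} [MeasurableSpace Ω] (μ : Measure Ω)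
    [IsProbabilityMeasure μ] {n d : ℕ} (σ2 : ℝ)
    (a0 : Fin n → ℝ) (X0 : Matrix (Fin n) (Fin d) ℝ)
    (ta : Ω → Fin n → ℝ) (tb : Ω → Fin d → ℝ)
    (hta_int : ∀ i, Integrable (fun ω => ta ω i) μ)
    (htb_int : ∀ i, Integrable (fun ω => tb ω i) μ)
    (haa_int : ∀ i j, Integrable (fun ω => ta ω i * ta ω j) μ)
    (hab_int : ∀ i j, Integrable (fun ω => ta ω i * tb ω j) μ)
    (hbb_int : ∀ i j, Integrable (fun ω => tb ω i * tb ω j) μ)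
    (hta_mean : ∀ i, ∫ ω, ta ω i ∂μ = 0)
    (htb_mean : ∀ i, ∫ ω, tb ω i ∂μ = 0)
    (haa : matExp μ (fun ω => vecMulVec (ta ω) (ta ω)) = σ2 • 1)
    (hab : matExp μ (fun ω => vecMulVec (ta ω) (tb ω)) = 0)
    (hbb : matExp μ (fun ω => vecMulVec (tb ω) (tb ω)) = σ2 • 1) :
    ∀ H : Matrix (Fin n) (Fin d) ℝ,
      matExp μ (fun ω =>
          fderiv ℝ (fun Y => tlsScore (a0 + ta ω) (X0ᵀ.mulVec a0 + tb ω) Y) X0 H) =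
        vecMulVec a0 a0 * H := by
  intro H
  set D := tlsScoreDerivOfMoments X0 H
  have hD : ∀ ω, fderiv ℝ (fun Y => tlsScore (a0 + ta ω) (X0ᵀ *ᵥ a0 + tb ω) Y) X0 H =
      D (vecMulVec a0 a0, 0, 0) + (D ∘ₗ momentsOfNoise a0 X0) (noiseMoments (ta ω) (tb ω)) :=
    fun ω => by
      rw [fderiv_tlsScore_apply, moments_eq_momentsOfNoise, map_add, LinearMap.comp_apply]
  have hmean_a : ∫ ω, ta ω ∂μ = 0 := funext fun i => (eval_integral hta_int i).trans (hta_mean i)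
  have hmean_b : ∫ ω, tb ω ∂μ = 0 := funext fun i => (eval_integral htb_int i).trans (htb_mean i)
  simp only [hD]
  rw [matExp_const_add_linearMap _ _
      (integrable_noiseMoments hta_int htb_int haa_int hab_int hbb_int),
    integral_noiseMoments hta_int htb_int haa_int hab_int hbb_int, hmean_a, hmean_b, haa, hab, hbb,
    LinearMap.comp_apply, ← map_add, of_symm_zero, momentsOfNoise_isotropic]
  simp only [Prod.mk_add_mk, zero_add]
  exact tlsScoreDerivOfMoments_isotropic X0 H _ σ2

/-- In the EIV model `a = a₀ + ã`, `b = X₀ᵀa₀ + b̃` with centered errors whose stacked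
covariance is `σ²I_{n+d}`, the expected derivative of the estimating function `s` at the
true parameter `X₀`, applied to a direction `H`, equals `a₀a₀ᵀH`. -/
theorem matExp_fderiv_tlsScore {Ω : Type*} [MeasurableSpace Ω] (μ : Measure Ω)
    [IsProbabilityMeasure μ] {n d : ℕ} (σ2 : ℝ) (hσ : 0 < σ2)
    (a0 : Fin n → ℝ) (X0 : Matrix (Fin n) (Fin d) ℝ)
    (ta : Ω → Fin n → ℝ) (tb : Ω → Fin d → ℝ)
    (hta_int : ∀ i, Integrable (fun ω => ta ω i) μ)
    (htb_int : ∀ i, Integrable (fun ω => tb ω i) μ)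
    (haa_int : ∀ i j, Integrable (fun ω => ta ω i * ta ω j) μ)
    (hab_int : ∀ i j, Integrable (fun ω => ta ω i * tb ω j) μ)
    (hbb_int : ∀ i j, Integrable (fun ω => tb ω i * tb ω j) μ)
    (hta_mean : ∀ i, ∫ ω, ta ω i ∂μ = 0)
    (htb_mean : ∀ i, ∫ ω, tb ω i ∂μ = 0)
    (haa : matExp μ (fun ω => vecMulVec (ta ω) (ta ω)) = σ2 • 1)
    (hab : matExp μ (fun ω => vecMulVec (ta ω) (tb ω)) = 0)
    (hbb : matExp μ (fun ω => vecMulVec (tb ω) (tb ω)) = σ2 • 1) :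
    ∀ H : Matrix (Fin n) (Fin d) ℝ,
      matExp μ (fun ω =>
          fderiv ℝ (fun Y => tlsScore (a0 + ta ω) (X0ᵀ.mulVec a0 + tb ω) Y) X0 H) =
        vecMulVec a0 a0 * H :=
  matExp_fderiv_tlsScore_general μ σ2 a0 X0 ta tb hta_int htb_int haa_int hab_int hbb_int hta_mean
    htb_mean haa hab hbb
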